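/- Let k ∈ ℕ ∪ {∞} and let X be a Banach space with the property that for every Lipschitz function f : X → ℝ and every η > 0 there exists a function g : X → ℝ of class C^k on X such that |f − g| ≤ η on X and lip(g, B(x₀,r)) ≤ lip(f, B(x₀, r+η)) + η for every closed ball B(x₀,r) ⊂ X. Let Ω ⊂ X be open and let u : Ω → ℝ be a K-Lipschitz function with the property that lip(u, B) < K for every bounded subset B of Ω. Then, for every continuous function ε : Ω → (0,+∞), there exists v : Ω → ℝ of class C^k on Ω such that (1) |u(x) − v(x)| ≤ ε(x) for every x ∈ Ω, and (2) ‖Dv(x)‖_* < K for all x ∈ Ω. -/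

import Mathlib

open Metric Set MeasureTheory

/-- `lipOn f s` is the Lipschitz constant of `f` on `s`:
the infimum of all `L > 0` such that `|f x - f y| ≤ L * dist x y` for all `x, y ∈ s`. -/
noncomputable def lipOn {X : Type*} [PseudoMetricSpace X] (f : X → ℝ) (s : Set X) : ℝ :=
  sInf {L : ℝ | 0 < L ∧ ∀ x ∈ s, ∀ y ∈ s, |f x - f y| ≤ L * dist x y}

/-- `f` is `K`-Lipschitz on `s`. -/
def IsLipschitzWithOn {X : Type*} [PseudoMetricSpace X] (K : ℝ) (f : X → ℝ) (s : Set X) : Prop :=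
  ∀ x ∈ s, ∀ y ∈ s, |f x - f y| ≤ K * dist x y

/-!
Exhaust `Ω` by the bounded sets `Ωₙ` of points of norm `< n` whose closed `1/n`-ball lies in `Ω`
and carries `ε > 1/n`; points of `Ωₙ` are at distance `≥ ρₙ = 1/((n+1)(n+2))` from the complement
of `Ωₙ₊₁`. The approximation property, applied to distance functions and composed with a smooth
step, gives `C^k` cutoffs `θₙ` equal to `1` near `Ωₙ` and to `0` near the complement of `Ωₙ₊₁`
with `‖Dθₙ‖ ≤ C/ρₙ`; applied to a `K`-Lipschitz extension of `u`, it gives `C^k` functions `gₙ`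
with `|u - gₙ| ≤ ηₙ` and `‖Dgₙ‖ ≤ lip(u, Ωₙ₊₂) + ηₙ` on `Ωₙ₊₁`. Near a point of `Ωₙ₊₁ \ Ωₙ`
the function `v = ∑ (θₙ - θₙ₋₁) gₙ` equals `θₙ gₙ + (1 - θₙ) gₙ₊₁`, so `|u - v| ≤ ηₙ` and
`‖Dv‖ ≤ lip(u, Ωₙ₊₂) + ηₙ + 2ηₙ‖Dθₙ‖`, which is `< K` once `ηₙ` is small compared with
`ρₙ (K - lip(u, Ωₙ₊₂))`; here `lip(u, Ωₙ₊₂) < K` because `Ωₙ₊₂` is bounded.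
-/

open Filter Topology

section Lipschitz

variable {Y : Type*} [PseudoMetricSpace Y] {f g : Y → ℝ} {s t : Set Y} {K L : ℝ}

theorem IsLipschitzWithOn.mono (hf : IsLipschitzWithOn K f t) (hst : s ⊆ t) :
    IsLipschitzWithOn K f s :=
  fun x hx y hy => hf x (hst hx) y (hst hy)

theorem IsLipschitzWithOn.of_le (hf : IsLipschitzWithOn K f s) (hKL : K ≤ L) :
    IsLipschitzWithOn L f s :=
  fun x hx y hy => (hf x hx y hy).trans (by gcongr)

theorem IsLipschitzWithOn.congr (hf : IsLipschitzWithOn K f s) (h : EqOn f g s) :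
    IsLipschitzWithOn K g s :=
  fun x hx y hy => by rw [← h hx, ← h hy]; exact hf x hx y hy

theorem IsLipschitzWithOn.exists_pos (hf : IsLipschitzWithOn K f s) :
    ∃ L, 0 < L ∧ IsLipschitzWithOn L f s :=
  ⟨|K| + 1, by positivity, hf.of_le (by linarith [le_abs_self K])⟩

theorem LipschitzOnWith.isLipschitzWithOn {K : NNReal} (hf : LipschitzOnWith K f s) :
    IsLipschitzWithOn K f s :=
  fun x hx y hy => by simpa only [Real.dist_eq] using hf.dist_le_mul x hx y hy

theorem IsLipschitzWithOn.exists_extension (hf : IsLipschitzWithOn K f s) :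
    ∃ F : Y → ℝ, IsLipschitzWithOn (max K 0) F univ ∧ EqOn f F s := by
  have hf' : LipschitzOnWith K.toNNReal f s := .of_dist_le_mul fun x hx y hy => by
    rw [Real.dist_eq, Real.coe_toNNReal']
    exact (hf x hx y hy).trans (by gcongr; exact le_max_left _ _)
  obtain ⟨F, hF, hfF⟩ := hf'.extend_real
  exact ⟨F, Real.coe_toNNReal' K ▸ hF.lipschitzOnWith.isLipschitzWithOn, hfF⟩

theorem lipOn_le (hL : 0 < L) (hf : IsLipschitzWithOn L f s) : lipOn f s ≤ L :=
  csInf_le ⟨0, fun _ hL => hL.1.le⟩ ⟨hL, hf⟩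

theorem lipOn_mono (hf : IsLipschitzWithOn K f t) (hst : s ⊆ t) : lipOn f s ≤ lipOn f t :=
  csInf_le_csInf ⟨0, fun _ hL => hL.1.le⟩ hf.exists_pos
    fun _ hL => ⟨hL.1, IsLipschitzWithOn.mono hL.2 hst⟩

theorem lipOn_congr (h : EqOn f g s) : lipOn f s = lipOn g s := by
  unfold lipOn
  congr 1
  ext L
  exact and_congr_right fun _ =>
    ⟨fun hf => IsLipschitzWithOn.congr hf h, fun hg => IsLipschitzWithOn.congr hg h.symm⟩

end Lipschitz

/-- `Real.smoothTransition` is constant off `[0, 1]`, so it factors through the projection onto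
`[0, 1]`, on which it is Lipschitz by compactness. -/
theorem Real.smoothTransition.exists_lipschitzWith :
    ∃ K, LipschitzWith K Real.smoothTransition := by
  obtain ⟨K, hK⟩ := (Real.smoothTransition.contDiff (n := 1)).locallyLipschitz.locallyLipschitzOn
    |>.exists_lipschitzOnWith_of_compact (isCompact_Icc (a := (0 : ℝ)) (b := 1))
  have hproj := (LipschitzWith.subtype_val _).comp (LipschitzWith.projIcc zero_le_one)
  refine ⟨K * (1 * 1), lipschitzOnWith_univ.1 ?_⟩
  have := hK.comp (hproj.lipschitzOnWith (s := univ)) fun x _ => Subtype.mem (projIcc 0 1 _ x)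
  simpa [Function.comp_def] using this

section SmoothStep

variable {X : Type*} [TopologicalSpace X] {w : X → ℝ} {x : X}

theorem eventuallyEq_smoothTransition_one (hw : ContinuousAt w x) (hx : 1 < w x) :
    (fun y => Real.smoothTransition (w y)) =ᶠ[𝓝 x] 1 :=
  (hw.eventually (lt_mem_nhds hx)).mono fun _ hy => Real.smoothTransition.one_of_one_le hy.le

theorem eventuallyEq_smoothTransition_zero (hw : ContinuousAt w x) (hx : w x < 0) :
    (fun y => Real.smoothTransition (w y)) =ᶠ[𝓝 x] 0 :=
  (hw.eventually (gt_mem_nhds hx)).mono fun _ hy => Real.smoothTransition.zero_of_nonpos hy.le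

end SmoothStep

theorem ContDiff.differentiable_of_one_le {E F : Type*} [NormedAddCommGroup E] [NormedSpace ℝ E]
    [NormedAddCommGroup F] [NormedSpace ℝ F] {f : E → F} {k : ℕ∞} (hf : ContDiff ℝ k f)
    (hk : 1 ≤ k) : Differentiable ℝ f :=
  (hf.of_le (mod_cast hk)).differentiable one_ne_zero

section Approx

variable {X : Type*} [NormedAddCommGroup X] [NormedSpace ℝ X] {k : ℕ∞}

theorem norm_fderiv_le_lipOn {g : X → ℝ} {x : X} {r L : ℝ} (hr : 0 < r)
    (hg : IsLipschitzWithOn L g (closedBall x r)) :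
    ‖fderiv ℝ g x‖ ≤ lipOn g (closedBall x r) := by
  refine le_csInf hg.exists_pos fun L' hL' => norm_fderiv_le_of_lip' ℝ hL'.1.le ?_
  filter_upwards [closedBall_mem_nhds x hr] with y hy
  rw [Real.norm_eq_abs, ← dist_eq_norm]
  exact hL'.2 y hy x (mem_closedBall_self hr.le)

def IsContDiffLipApprox (k : ℕ∞) (f : X → ℝ) (η : ℝ) (g : X → ℝ) : Prop :=
  ContDiff ℝ k g ∧ (∀ x, |f x - g x| ≤ η) ∧
    ∀ (x₀ : X) (r : ℝ), 0 < r → lipOn g (closedBall x₀ r) ≤ lipOn f (closedBall x₀ (r + η)) + η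

def ContDiffLipApproximable (k : ℕ∞) (X : Type*) [NormedAddCommGroup X] [NormedSpace ℝ X] :
    Prop :=
  ∀ f : X → ℝ, (∃ K : ℝ, IsLipschitzWithOn K f univ) → ∀ η : ℝ, 0 < η →
    ∃ g, IsContDiffLipApprox k f η g

theorem IsContDiffLipApprox.norm_fderiv_le {f g : X → ℝ} {η L : ℝ} {S : Set X} (hk : 1 ≤ k)
    (hg : IsContDiffLipApprox k f η g) (hf : IsLipschitzWithOn L f S) (x : X) {r : ℝ}
    (hηr : η < r) (hS : closedBall x r ⊆ S) : ‖fderiv ℝ g x‖ ≤ lipOn f S + η := by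
  obtain ⟨K, t, ht, hK⟩ := (hg.1.of_le (mod_cast hk)).locallyLipschitz x
  obtain ⟨r₀, hr₀, hr₀t⟩ := nhds_basis_closedBall.mem_iff.1 ht
  have hr' : 0 < min r₀ (r - η) := lt_min hr₀ (sub_pos.2 hηr)
  calc ‖fderiv ℝ g x‖ ≤ lipOn g (closedBall x (min r₀ (r - η))) :=
        norm_fderiv_le_lipOn hr' <| (hK.mono <| (closedBall_subset_closedBall
          (min_le_left _ _)).trans hr₀t).isLipschitzWithOn
    _ ≤ lipOn f (closedBall x (min r₀ (r - η) + η)) + η := hg.2.2 x _ hr'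
    _ ≤ lipOn f S + η := by
        gcongr
        refine lipOn_mono hf ((closedBall_subset_closedBall ?_).trans hS)
        linarith [min_le_right r₀ (r - η)]

theorem ContDiffLipApproximable.exists_approx_seq (hX : ContDiffLipApproximable k X)
    (hk : 1 ≤ k) {F : X → ℝ} {L : ℝ} (hF : IsLipschitzWithOn L F univ) {Om : ℕ → Set X}
    {ρ η : ℕ → ℝ} (hgap : ∀ n, ∀ x ∈ Om n, closedBall x (ρ n) ⊆ Om (n + 1))
    (hη : ∀ n, 0 < η n) (hηanti : Antitone η) (hηρ : ∀ n, η n < ρ (n + 1)) :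
    ∃ g : ℕ → X → ℝ, (∀ n, ContDiff ℝ k (g n)) ∧ ∀ N, ∀ x ∈ Om (N + 1), ∀ n, N ≤ n →
      |F x - g n x| ≤ η N ∧ ‖fderiv ℝ (g n) x‖ ≤ lipOn F (Om (N + 2)) + η N := by
  choose g hg using fun n => hX F ⟨L, hF⟩ (η n) (hη n)
  refine ⟨g, fun n => (hg n).1, fun N x hx n hn => ⟨((hg n).2.1 x).trans (hηanti hn), ?_⟩⟩
  refine ((hg n).norm_fderiv_le hk (hF.mono (subset_univ _)) x ?_ (hgap _ x hx)).trans
    (by gcongr; exact hηanti hn)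
  exact (hηanti hn).trans_lt (hηρ N)

end Approx

theorem exists_antitone_pos_le {a : ℕ → ℝ} (ha : ∀ n, 0 < a n) :
    ∃ η : ℕ → ℝ, Antitone η ∧ ∀ n, 0 < η n ∧ η n ≤ a n :=
  ⟨fun n => (Finset.range (n + 1)).inf' Finset.nonempty_range_add_one a,
    fun _ _ hmn => Finset.inf'_mono _ (Finset.range_subset_range.2 (by omega)) _,
    fun n => ⟨(Finset.lt_inf'_iff _).2 fun i _ => ha i,
      Finset.inf'_le _ (Finset.self_mem_range_succ n)⟩⟩

theorem finsum_sub_mul_eq_of_nested {a b : ℕ → ℝ} (hnest : ∀ m, a m ≠ 0 → a (m + 1) = 1)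
    {N : ℕ} (h0 : a (N - 1) = 0) (h1 : a (N + 1) = 1) :
    ∑ᶠ n, (a n - a (n - 1)) * b n = a N * b N + (1 - a N) * b (N + 1) := by
  have hone : ∀ i m, a i = 1 → i ≤ m → a m = 1 := fun i m hi him => by
    induction m, him using Nat.le_induction with
    | base => exact hi
    | succ m _ ih => exact hnest m (ih ▸ one_ne_zero)
  have hzero : ∀ m ≤ N - 1, a m = 0 := fun m hm => by
    by_contra ham
    rcases hm.lt_or_eq with hlt | rfl
    · exact one_ne_zero (hone _ _ (hnest m ham) hlt ▸ h0)
    · exact ham h0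
  rw [finsum_eq_finsetSum_of_support_subset (s := {N, N + 1}) _ fun n hn => ?_,
    Finset.sum_pair (by omega), h1, Nat.add_sub_cancel, h0]
  · ring
  · by_contra hns
    simp only [Finset.coe_insert, Finset.coe_singleton, mem_insert_iff, mem_singleton_iff,
      not_or] at hns
    refine hn (show (a n - a (n - 1)) * b n = 0 from ?_)
    rcases lt_or_gt_of_ne hns.1 with hlt | hgt
    · rw [hzero n (by omega), hzero (n - 1) (by omega), sub_zero, zero_mul]
    · rw [hone _ n h1 (by omega), hone _ (n - 1) h1 (by omega), sub_self, zero_mul]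

section Gluing

variable {X : Type*} [TopologicalSpace X]

structure IsNestedCutoffs (Om : ℕ → Set X) (θ : ℕ → X → ℝ) : Prop where
  zero : θ 0 = 0
  eventuallyEq_one : ∀ n, ∀ x ∈ Om n, θ n =ᶠ[𝓝 x] 1
  eventuallyEq_zero : ∀ n, ∀ x ∉ Om (n + 1), θ n =ᶠ[𝓝 x] 0

variable {Om : ℕ → Set X} {θ : ℕ → X → ℝ}

theorem IsNestedCutoffs.eq_one_of_ne_zero (hθ : IsNestedCutoffs Om θ) {m : ℕ} {y : X}
    (hy : θ m y ≠ 0) : θ (m + 1) y = 1 := by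
  have hmem : y ∈ Om (m + 1) := by_contra fun h => hy (hθ.eventuallyEq_zero m y h).eq_of_nhds
  exact (hθ.eventuallyEq_one _ y hmem).eq_of_nhds

theorem IsNestedCutoffs.notMem_zero (hθ : IsNestedCutoffs Om θ) (x : X) : x ∉ Om 0 := fun hx =>
  zero_ne_one (α := ℝ) (by simpa [hθ.zero] using (hθ.eventuallyEq_one 0 x hx).eq_of_nhds)

-- `n - 1` is truncated: the `n = 0` term of the sum is `(θ 0 - θ 0) * g 0 = 0`.
theorem IsNestedCutoffs.eventuallyEq_finsum (hθ : IsNestedCutoffs Om θ) (g : ℕ → X → ℝ)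
    {x : X} {N : ℕ} (hx : x ∈ Om (N + 1)) (hxN : x ∉ Om N) :
    (fun y => ∑ᶠ n, (θ n y - θ (n - 1) y) * g n y) =ᶠ[𝓝 x]
      fun y => θ N y * g N y + (1 - θ N y) * g (N + 1) y := by
  have h0 : θ (N - 1) =ᶠ[𝓝 x] 0 := by
    rcases N with _ | N
    · rw [hθ.zero]
    · exact hθ.eventuallyEq_zero N x hxN
  filter_upwards [h0, hθ.eventuallyEq_one _ x hx] with y hy0 hy1
  exact finsum_sub_mul_eq_of_nested (a := (θ · y)) (fun m => hθ.eq_one_of_ne_zero) hy0 hy1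

end Gluing

theorem norm_smul_add_one_sub_smul_le {E : Type*} [SeminormedAddCommGroup E] [NormedSpace ℝ E]
    {a b : E} {t c : ℝ} (ht : t ∈ Icc 0 1) (ha : ‖a‖ ≤ c) (hb : ‖b‖ ≤ c) :
    ‖t • a + (1 - t) • b‖ ≤ c :=
  mem_closedBall_zero_iff.1 <| convex_closedBall (0 : E) c (mem_closedBall_zero_iff.2 ha)
    (mem_closedBall_zero_iff.2 hb) ht.1 (sub_nonneg.2 ht.2) (add_sub_cancel t 1)

theorem abs_sub_interpolate_le {t a b z c : ℝ} (ht : t ∈ Icc 0 1) (ha : |z - a| ≤ c)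
    (hb : |z - b| ≤ c) : |z - (t * a + (1 - t) * b)| ≤ c := by
  have := norm_smul_add_one_sub_smul_le (a := z - a) (b := z - b) ht ha hb
  rw [Real.norm_eq_abs, smul_eq_mul, smul_eq_mul] at this
  convert this using 2
  ring

section Interpolate

variable {X : Type*} [NormedAddCommGroup X] [NormedSpace ℝ X]

theorem norm_fderiv_interpolate_le {θ g₁ g₂ : X → ℝ} {x : X} {z η c : ℝ}
    (hθ : DifferentiableAt ℝ θ x) (hg₁ : DifferentiableAt ℝ g₁ x)
    (hg₂ : DifferentiableAt ℝ g₂ x) (hθx : θ x ∈ Icc 0 1) (h₁ : |z - g₁ x| ≤ η)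
    (h₂ : |z - g₂ x| ≤ η) (hc₁ : ‖fderiv ℝ g₁ x‖ ≤ c) (hc₂ : ‖fderiv ℝ g₂ x‖ ≤ c) :
    ‖fderiv ℝ (fun y => θ y * g₁ y + (1 - θ y) * g₂ y) x‖ ≤ c + 2 * η * ‖fderiv ℝ θ x‖ := by
  have hD : HasFDerivAt (fun y => θ y * g₁ y + (1 - θ y) * g₂ y)
      (θ x • fderiv ℝ g₁ x + (1 - θ x) • fderiv ℝ g₂ x + (g₁ x - g₂ x) • fderiv ℝ θ x) x := by
    refine ((hθ.hasFDerivAt.mul hg₁.hasFDerivAt).add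
      ((hθ.hasFDerivAt.const_sub 1).mul hg₂.hasFDerivAt)).congr_fderiv ?_
    simp only [sub_smul, smul_neg, one_smul]
    abel
  have hg₁₂ : ‖g₁ x - g₂ x‖ ≤ 2 * η := by
    rw [Real.norm_eq_abs, two_mul]
    refine (abs_sub_le _ z _).trans (add_le_add ?_ h₂)
    rwa [abs_sub_comm]
  rw [hD.fderiv]
  refine (norm_add_le _ _).trans (add_le_add (norm_smul_add_one_sub_smul_le hθx hc₁ hc₂) ?_)
  rw [norm_smul]
  gcongr

theorem IsNestedCutoffs.exists_finsum_estimates {k : ℕ∞} {Om : ℕ → Set X} {θ g : ℕ → X → ℝ}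
    (hθ : IsNestedCutoffs Om θ) (hk : 1 ≤ k) (hθk : ∀ n, ContDiff ℝ k (θ n))
    (hθI : ∀ n x, θ n x ∈ Icc 0 1) (hgk : ∀ n, ContDiff ℝ k (g n)) {x : X}
    (hx : ∃ n, x ∈ Om n) {z : ℝ} {η c : ℕ → ℝ}
    (hgx : ∀ N, x ∈ Om (N + 1) → ∀ n, N ≤ n → n ≤ N + 1 →
      |z - g n x| ≤ η N ∧ ‖fderiv ℝ (g n) x‖ ≤ c N) :
    ∃ N, x ∈ Om (N + 1) ∧ ContDiffAt ℝ k (fun y => ∑ᶠ n, (θ n y - θ (n - 1) y) * g n y) x ∧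
      |z - ∑ᶠ n, (θ n x - θ (n - 1) x) * g n x| ≤ η N ∧
      ‖fderiv ℝ (fun y => ∑ᶠ n, (θ n y - θ (n - 1) y) * g n y) x‖ ≤
        c N + 2 * η N * ‖fderiv ℝ (θ N) x‖ := by
  obtain ⟨N, hxN, hxN1⟩ := Nat.exists_not_and_succ_of_not_zero_of_exists (p := (x ∈ Om ·))
    (hθ.notMem_zero x) hx
  have hv := hθ.eventuallyEq_finsum g hxN1 hxN
  obtain ⟨h₁, hc₁⟩ := hgx N hxN1 N le_rfl N.le_succ
  obtain ⟨h₂, hc₂⟩ := hgx N hxN1 (N + 1) N.le_succ le_rfl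
  refine ⟨N, hxN1, ?_, ?_, ?_⟩
  · exact (((hθk N).mul (hgk N)).add ((contDiff_const.sub (hθk N)).mul
      (hgk (N + 1)))).contDiffAt.congr_of_eventuallyEq hv
  · exact hv.eq_of_nhds ▸ abs_sub_interpolate_le (hθI N x) h₁ h₂
  · rw [hv.fderiv_eq]
    exact norm_fderiv_interpolate_le ((hθk N).differentiable_of_one_le hk x)
      ((hgk N).differentiable_of_one_le hk x) ((hgk (N + 1)).differentiable_of_one_le hk x)
      (hθI N x) h₁ h₂ hc₁ hc₂

end Interpolate

section Cutoff

variable {X : Type*} [NormedAddCommGroup X] [NormedSpace ℝ X] {k : ℕ∞}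

theorem ContDiffLipApproximable.exists_cutoff (hX : ContDiffLipApproximable k X) (hk : 1 ≤ k) :
    ∃ C : ℝ, 0 ≤ C ∧ ∀ (s t : Set X) (ρ : ℝ), 0 < ρ → (∀ x ∈ s, closedBall x ρ ⊆ t) →
      ∃ θ : X → ℝ, ContDiff ℝ k θ ∧ (∀ x, θ x ∈ Icc 0 1) ∧ (∀ x ∈ s, θ =ᶠ[𝓝 x] 1) ∧
        (∀ x ∉ t, θ =ᶠ[𝓝 x] 0) ∧ ∀ x, ‖fderiv ℝ θ x‖ ≤ C / ρ := by
  obtain ⟨Kσ, hσ⟩ := Real.smoothTransition.exists_lipschitzWith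
  refine ⟨4 * Kσ, by positivity, fun s t ρ hρ hst => ?_⟩
  rcases eq_or_ne t univ with rfl | htc
  · refine ⟨1, contDiff_const, fun _ => ⟨zero_le_one, le_rfl⟩, fun _ _ => EventuallyEq.rfl,
      fun x hx => absurd (mem_univ x) hx, fun x => ?_⟩
    simpa only [Pi.one_def, fderiv_const_apply, norm_zero] using by positivity
  -- `h` is `ρ/8`-close to the distance to `tᶜ`, hence `w = 2h/ρ - 1/2` is `> 1` on `s` and
  -- `< 0` off `t`, while `‖Dh‖ ≤ 2` gives `‖Dw‖ ≤ 4/ρ`.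
  set η := min (ρ / 8) 1
  have hd : IsLipschitzWithOn 1 (infDist · tᶜ) univ := by
    simpa using (lipschitz_infDist_pt (s := tᶜ)).lipschitzOnWith.isLipschitzWithOn
  obtain ⟨h, hh⟩ := hX _ ⟨1, hd⟩ η (by positivity)
  set w : X → ℝ := fun y => 2 / ρ * h y - 1 / 2
  have hw : ContDiff ℝ k w := (contDiff_const.mul hh.1).sub contDiff_const
  have hwd : Differentiable ℝ w := hw.differentiable_of_one_le hk
  refine ⟨fun y => Real.smoothTransition (w y), Real.smoothTransition.contDiff.comp hw,
    fun y => ⟨Real.smoothTransition.nonneg _, Real.smoothTransition.le_one _⟩,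
    fun x hx => eventuallyEq_smoothTransition_one hwd.continuous.continuousAt ?_,
    fun x hx => eventuallyEq_smoothTransition_zero hwd.continuous.continuousAt ?_, fun x => ?_⟩
  · have hρd : ρ ≤ infDist x tᶜ := not_lt.1 fun hlt => by
      obtain ⟨y, hy, hxy⟩ := (infDist_lt_iff (nonempty_compl.2 htc)).1 hlt
      exact hy (hst x hx (mem_closedBall'.2 hxy.le))
    have := abs_le.1 (hh.2.1 x)
    have : 7 * ρ / 8 ≤ h x := by linarith [min_le_left (ρ / 8) 1]
    show 1 < 2 / ρ * h x - 1 / 2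
    rw [div_mul_eq_mul_div, lt_sub_iff_add_lt, lt_div_iff₀ hρ]
    linarith
  · have : |infDist x tᶜ - h x| ≤ η := hh.2.1 x
    rw [infDist_zero_of_mem (mem_compl hx), zero_sub, abs_neg] at this
    have : h x ≤ ρ / 8 := by linarith [le_abs_self (h x), min_le_left (ρ / 8) 1]
    show 2 / ρ * h x - 1 / 2 < 0
    rw [div_mul_eq_mul_div, sub_neg, div_lt_iff₀ hρ]
    linarith
  · have hDh : ‖fderiv ℝ h x‖ ≤ 2 := by
      have := hh.norm_fderiv_le hk hd x (lt_add_one η) (subset_univ _)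
      linarith [lipOn_le one_pos hd, min_le_right (ρ / 8) 1]
    have hDw : fderiv ℝ w x = (2 / ρ) • fderiv ℝ h x := by
      simp only [w, fderiv_sub_const, fderiv_const_mul (hh.1.differentiable_of_one_le hk x)]
    calc ‖fderiv ℝ (Real.smoothTransition ∘ w) x‖
        ≤ ‖fderiv ℝ Real.smoothTransition (w x)‖ * ‖fderiv ℝ w x‖ := by
          rw [fderiv_comp x (Real.smoothTransition.contDiff (n := 1).differentiable one_ne_zero _)
            (hwd x)]
          exact ContinuousLinearMap.opNorm_comp_le _ _
      _ ≤ Kσ * (2 / ρ * 2) := by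
          rw [hDw, norm_smul, Real.norm_of_nonneg (by positivity)]
          gcongr
          exact norm_fderiv_le_of_lipschitz ℝ hσ
      _ = 4 * Kσ / ρ := by ring

theorem ContDiffLipApproximable.exists_isNestedCutoffs (hX : ContDiffLipApproximable k X)
    (hk : 1 ≤ k) :
    ∃ C : ℝ, 0 ≤ C ∧ ∀ (Om : ℕ → Set X) (ρ : ℕ → ℝ), Om 0 = ∅ → (∀ n, 0 < ρ n) →
      (∀ n, ∀ x ∈ Om n, closedBall x (ρ n) ⊆ Om (n + 1)) →
      ∃ θ : ℕ → X → ℝ, IsNestedCutoffs Om θ ∧ (∀ n, ContDiff ℝ k (θ n)) ∧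
        (∀ n x, θ n x ∈ Icc 0 1) ∧ ∀ n x, ‖fderiv ℝ (θ n) x‖ ≤ C / ρ n := by
  obtain ⟨C, hC, hcut⟩ := hX.exists_cutoff hk
  refine ⟨C, hC, fun Om ρ h0 hρ hgap => ?_⟩
  choose θ hθk hθI hθ1 hθ0 hDθ using fun n => hcut (Om n) (Om (n + 1)) (ρ n) (hρ n) (hgap n)
  refine ⟨fun n => if n = 0 then 0 else θ n, ⟨if_pos rfl, fun n x hx => ?_, fun n x hx => ?_⟩,
    fun n => ?_, fun n x => ?_, fun n x => ?_⟩ <;> (try dsimp only) <;> split_ifs with hn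
  · exact absurd (hn ▸ hx) (h0 ▸ notMem_empty x)
  · exact hθ1 n x hx
  · exact EventuallyEq.rfl
  · exact hθ0 n x hx
  · exact contDiff_const
  · exact hθk n
  · exact ⟨le_rfl, zero_le_one⟩
  · exact hθI n x
  · simpa only [Pi.zero_def, fderiv_const_apply, norm_zero] using div_nonneg hC (hρ n).le
  · exact hDθ n x

end Cutoff

section Exhaustion

variable {X : Type*} [NormedAddCommGroup X] {Ω : Set X} {ε : X → ℝ}

def exhaustion (Ω : Set X) (ε : X → ℝ) (n : ℕ) : Set X :=
  {x | ‖x‖ < n ∧ ∀ y ∈ closedBall x (n : ℝ)⁻¹, y ∈ Ω ∧ (n : ℝ)⁻¹ < ε y}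

theorem exhaustion_zero : exhaustion Ω ε 0 = ∅ :=
  eq_empty_of_forall_notMem fun x hx => (norm_nonneg x).not_gt (by simpa using hx.1)

theorem exhaustion_subset (n : ℕ) : exhaustion Ω ε n ⊆ Ω :=
  fun x hx => (hx.2 x (mem_closedBall_self (by positivity))).1

theorem inv_lt_of_mem_exhaustion {n : ℕ} {x : X} (hx : x ∈ exhaustion Ω ε n) :
    (n : ℝ)⁻¹ < ε x :=
  (hx.2 x (mem_closedBall_self (by positivity))).2

theorem isBounded_exhaustion (n : ℕ) : Bornology.IsBounded (exhaustion Ω ε n) :=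
  (isBounded_ball (x := 0) (r := n)).subset fun _ hx => mem_ball_zero_iff.2 hx.1

theorem closedBall_subset_exhaustion_succ {n : ℕ} {x : X} (hx : x ∈ exhaustion Ω ε n) :
    closedBall x ((n + 1) * (n + 2) : ℝ)⁻¹ ⊆ exhaustion Ω ε (n + 1) := by
  obtain ⟨hxn, hxΩ⟩ := hx
  have hn : (1 : ℝ) ≤ n := Nat.one_le_cast.2 (Nat.pos_of_ne_zero fun h => by
    simp only [h, CharP.cast_eq_zero] at hxn; exact (norm_nonneg x).not_gt hxn)
  have hρ1 : ((n + 1) * (n + 2) : ℝ)⁻¹ ≤ 1 := inv_le_one_of_one_le₀ (by nlinarith)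
  have hρ : ((n : ℝ) + 1)⁻¹ + ((n + 1) * (n + 2) : ℝ)⁻¹ ≤ (n : ℝ)⁻¹ := by
    simp only [inv_eq_one_div]
    rw [div_add_div _ _ (by positivity) (by positivity),
      div_le_div_iff₀ (by positivity) (by positivity)]
    nlinarith
  intro y hy
  refine ⟨?_, fun z hz => ?_⟩
  · push_cast
    linarith [norm_le_of_mem_closedBall hy]
  · have hzx : z ∈ closedBall x (n : ℝ)⁻¹ := mem_closedBall.2 <| (dist_triangle z y x).trans <|
      by push_cast at hz; exact (add_le_add (mem_closedBall.1 hz) (mem_closedBall.1 hy)).trans hρ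
    push_cast
    exact ⟨(hxΩ z hzx).1, lt_of_le_of_lt (by gcongr; linarith) (hxΩ z hzx).2⟩

theorem exists_mem_exhaustion (hΩ : IsOpen Ω) (hε : ContinuousOn ε Ω) {x : X} (hx : x ∈ Ω)
    (hεx : 0 < ε x) : ∃ n, x ∈ exhaustion Ω ε n := by
  have hev : ∀ᶠ y in 𝓝 x, y ∈ Ω ∧ ε x / 2 < ε y := (hΩ.eventually_mem hx).and
    ((hε.continuousAt (hΩ.mem_nhds hx)).eventually (lt_mem_nhds (half_lt_self hεx)))
  obtain ⟨r, hr, hball⟩ := Metric.eventually_nhds_iff_ball.1 hev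
  have hm : 0 < min r (ε x / 2) := by positivity
  obtain ⟨n, hn⟩ := exists_nat_gt (max ‖x‖ (min r (ε x / 2))⁻¹)
  have hn' : (n : ℝ)⁻¹ < min r (ε x / 2) :=
    inv_lt_of_inv_lt₀ hm ((le_max_right _ _).trans_lt hn)
  refine ⟨n, (le_max_left _ _).trans_lt hn, fun y hy => ?_⟩
  obtain ⟨hyΩ, hεy⟩ := hball y (mem_ball.2 ((mem_closedBall.1 hy).trans_lt
    (hn'.trans_le (min_le_left _ _))))
  exact ⟨hyΩ, (hn'.trans_le (min_le_right _ _)).trans hεy⟩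

end Exhaustion

theorem stmt_9_general (k : ℕ∞) (hk : 1 ≤ k)
    {X : Type*} [NormedAddCommGroup X] [NormedSpace ℝ X]
    (hX : ∀ f : X → ℝ, (∃ K : ℝ, IsLipschitzWithOn K f Set.univ) → ∀ η : ℝ, 0 < η →
      ∃ g : X → ℝ, ContDiff ℝ k g ∧ (∀ x : X, |f x - g x| ≤ η) ∧
        ∀ (x₀ : X) (r : ℝ), 0 < r →
          lipOn g (closedBall x₀ r) ≤ lipOn f (closedBall x₀ (r + η)) + η)
    (Ω : Set X) (hΩ : IsOpen Ω) (K : ℝ) (u : X → ℝ)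
    (hu : IsLipschitzWithOn K u Ω)
    (hloc : ∀ B ⊆ Ω, Bornology.IsBounded B → lipOn u B < K)
    (ε : X → ℝ) (hεpos : ∀ x ∈ Ω, 0 < ε x) (hεcont : ContinuousOn ε Ω) :
    ∃ v : X → ℝ,
      ContDiffOn ℝ k v Ω ∧
      (∀ x ∈ Ω, |u x - v x| ≤ ε x) ∧
      (∀ x ∈ Ω, ‖fderiv ℝ v x‖ < K) := by
  have hX' : ContDiffLipApproximable k X := hX
  set Om := exhaustion Ω ε
  set ρ : ℕ → ℝ := fun n => ((n + 1) * (n + 2) : ℝ)⁻¹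
  obtain ⟨C, hC, hcut⟩ := hX'.exists_isNestedCutoffs hk
  obtain ⟨θ, hθ, hθk, hθI, hDθ⟩ := hcut Om ρ exhaustion_zero (fun n => by positivity)
    fun n x hx => closedBall_subset_exhaustion_succ hx
  obtain ⟨F, hF, huF⟩ := hu.exists_extension
  set L : ℕ → ℝ := fun n => lipOn F (Om (n + 2))
  have hLK : ∀ n, L n < K := fun n =>
    (lipOn_congr (s := Om (n + 2)) (huF.mono (exhaustion_subset _))).symm.trans_lt
      (hloc _ (exhaustion_subset _) (isBounded_exhaustion _))
  -- `ηₙ` keeps `|u - gₙ|` below `ε` on `Om (n + 1)`, its radius inside the gap `ρ (n + 1)`, and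
  -- the gradient of `v` on `Om (n + 1) \ Om n` below `(K + L n) / 2`.
  obtain ⟨η, hηanti, hη⟩ := exists_antitone_pos_le (a := fun n =>
      min (min (n + 1 : ℝ)⁻¹ (ρ (n + 1) / 2)) ((K - L n) / (2 * (1 + 2 * C / ρ n))))
    fun n => lt_min (by positivity) (div_pos (sub_pos.2 (hLK n)) (by positivity))
  obtain ⟨g, hgk, hgx⟩ := hX'.exists_approx_seq hk hF (Om := Om) (ρ := ρ)
    (fun n x hx => closedBall_subset_exhaustion_succ hx) (fun n => (hη n).1) hηanti fun n => by
      linarith [(hη n).2.trans ((min_le_left _ _).trans (min_le_right _ _)),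
        show 0 < ρ (n + 1) by positivity]
  refine ⟨fun y => ∑ᶠ n, (θ n y - θ (n - 1) y) * g n y, fun x hx => ?_, fun x hx => ?_,
    fun x hx => ?_⟩ <;>
    obtain ⟨N, hxN, hvk, hvu, hvD⟩ := hθ.exists_finsum_estimates hk hθk hθI hgk
      (exists_mem_exhaustion hΩ hεcont hx (hεpos x hx)) fun N hN n hn _ => hgx N x hN n hn
  · exact hvk.contDiffWithinAt
  · rw [huF hx]
    refine hvu.trans (((hη N).2.trans ((min_le_left _ _).trans (min_le_left _ _))).trans ?_)
    exact_mod_cast (inv_lt_of_mem_exhaustion hxN).le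
  · have hηK := (hη N).2.trans (min_le_right _ _)
    rw [le_div_iff₀ (by positivity)] at hηK
    have := (hη N).1
    calc _ ≤ L N + η N + 2 * η N * ‖fderiv ℝ (θ N) x‖ := hvD
      _ ≤ L N + η N + 2 * η N * (C / ρ N) := by gcongr; exact hDθ N x
      _ = L N + η N * (2 * (1 + 2 * C / ρ N)) / 2 := by ring
      _ < K := by linarith [hLK N]

/-- Claim 2: a `K`-Lipschitz function on an open set `Ω` of a suitable Banach space, whose
Lipschitz constant on every bounded subset of `Ω` is `< K`, can be `C^0`-finely approximated
by `C^k` functions with derivative of norm `< K` everywhere on `Ω`. -/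
theorem stmt_9 (k : ℕ∞) (hk : 1 ≤ k)
    {X : Type*} [NormedAddCommGroup X] [NormedSpace ℝ X] [CompleteSpace X]
    (hX : ∀ f : X → ℝ, (∃ K : ℝ, IsLipschitzWithOn K f Set.univ) → ∀ η : ℝ, 0 < η →
      ∃ g : X → ℝ, ContDiff ℝ k g ∧ (∀ x : X, |f x - g x| ≤ η) ∧
        ∀ (x₀ : X) (r : ℝ), 0 < r →
          lipOn g (closedBall x₀ r) ≤ lipOn f (closedBall x₀ (r + η)) + η)
    (Ω : Set X) (hΩ : IsOpen Ω) (K : ℝ) (u : X → ℝ)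
    (hu : IsLipschitzWithOn K u Ω)
    (hloc : ∀ B ⊆ Ω, Bornology.IsBounded B → lipOn u B < K)
    (ε : X → ℝ) (hεpos : ∀ x ∈ Ω, 0 < ε x) (hεcont : ContinuousOn ε Ω) :
    ∃ v : X → ℝ,
      ContDiffOn ℝ k v Ω ∧
      (∀ x ∈ Ω, |u x - v x| ≤ ε x) ∧
      (∀ x ∈ Ω, ‖fderiv ℝ v x‖ < K) :=
  stmt_9_general k hk hX Ω hΩ K u hu hloc ε hεpos hεcont
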